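/- The term-rewriting system of the previous statement is locally confluent: if a word t rewrites in one step to both t′ and t″, then there is a word t‴ reachable from t′ and from t″ by chains of rewrites of length at most 2. -/

import Mathlib

open CategoryTheory

/-- The data from which the category `O` of opetopes is presented: for each `k` the
category `O_k` of `k`-opetopes; for each `(k+1)`-opetope `α` a set `G k x α` of generating
face maps from each of its `(k-1)`-dimensional faces `x`; for each face map `γ : x → α`
and morphism `g : α ⟶ β` of `O_{k+1}` the unique restriction of `g` to the specified face
(a `(k)`-morphism `x ⟶ y` together with the corresponding face map `y → β`); and the
identifications of faces where composition occurs, recorded as a relation `Ident` on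
composable pairs of face maps mediated by an object-morphism `f : x ⟶ y`. -/
structure OpData where
  Obj : ℕ → Type
  [cat : ∀ k, SmallCategory (Obj k)]
  G : ∀ k, Obj k → Obj (k + 1) → Type
  restr : ∀ {k : ℕ} {x : Obj k} {α β : Obj (k + 1)},
    G k x α → (α ⟶ β) → Σ y : Obj k, (x ⟶ y) × G k y β
  Ident : ∀ {k : ℕ} {x y : Obj k} {α β : Obj (k + 1)} {θ : Obj (k + 2)},
    G k x α → G (k + 1) α θ → G k y β → G (k + 1) β θ → (x ⟶ y) → Prop

attribute [instance] OpData.cat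

/-- Objects of the category of opetopes: opetopes of all dimensions. -/
def OpData.TotalObj (D : OpData) : Type := Σ k, D.Obj k

/-- Generating morphisms of the category of opetopes: the morphisms of each `O_k`, and the
generating face maps. -/
inductive OpData.Gen (D : OpData) : D.TotalObj → D.TotalObj → Type
  | ofHom {k : ℕ} {a b : D.Obj k} : (a ⟶ b) → D.Gen ⟨k, a⟩ ⟨k, b⟩
  | face {k : ℕ} {x : D.Obj k} {α : D.Obj (k + 1)} : D.G k x α → D.Gen ⟨k, x⟩ ⟨k + 1, α⟩

instance OpData.quiverTotal (D : OpData) : Quiver D.TotalObj := ⟨D.Gen⟩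


/-- The basic rewriting rules, obtained by orienting the equations of the presentation of
`O` from left to right:  `γ` then `g` rewrites to `γg` then `γ'` (restriction); a
composable pair of morphisms of `O_k` rewrites to its composite; an identity followed by a
face map `γ` rewrites to `γ`. -/
inductive OpData.ORel (D : OpData) :
    ∀ {a b : Paths D.TotalObj}, (a ⟶ b) → (a ⟶ b) → Prop
  | r1 {k : ℕ} {x : D.Obj k} {α β : D.Obj (k + 1)} (γ : D.G k x α) (g : α ⟶ β) :
      OpData.ORel D
        ((Quiver.Hom.toPath (OpData.Gen.face γ)).comp
          (Quiver.Hom.toPath (OpData.Gen.ofHom g)))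
        ((Quiver.Hom.toPath (OpData.Gen.ofHom (D.restr γ g).2.1)).comp
          (Quiver.Hom.toPath (OpData.Gen.face (D.restr γ g).2.2)))
  | r2 {k : ℕ} {a b c : D.Obj k} (f : a ⟶ b) (g : b ⟶ c) :
      OpData.ORel D
        ((Quiver.Hom.toPath (OpData.Gen.ofHom f)).comp
          (Quiver.Hom.toPath (OpData.Gen.ofHom g)))
        (Quiver.Hom.toPath (OpData.Gen.ofHom (f ≫ g)))
  | r3 {k : ℕ} {x : D.Obj k} {α : D.Obj (k + 1)} (γ : D.G k x α) :
      OpData.ORel D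
        ((Quiver.Hom.toPath (OpData.Gen.ofHom (𝟙 x))).comp
          (Quiver.Hom.toPath (OpData.Gen.face γ)))
        (Quiver.Hom.toPath (OpData.Gen.face γ))

/-- One rewriting step: a basic rule applied anywhere inside a word of generators. -/
inductive OpData.Step (D : OpData) :
    ∀ {a b : Paths D.TotalObj}, (a ⟶ b) → (a ⟶ b) → Prop
  | mk {a b c d : Paths D.TotalObj} (p : a ⟶ b) {u v : b ⟶ c} (q : c ⟶ d)
      (h : D.ORel u v) : OpData.Step D (p ≫ u ≫ q) (p ≫ v ≫ q)

/-- The weight of a generator relative to dimension `j`: `1` for a morphism of `O_j`,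
`0` otherwise. -/
def OpData.genWt (D : OpData) (j : ℕ) : ∀ {a b : D.TotalObj}, D.Gen a b → ℕ
  | _, _, @OpData.Gen.ofHom _ k' _ _ _ => if k' = j then 1 else 0
  | _, _, @OpData.Gen.face _ _ _ _ _ => 0
/-- A chain of at most two rewriting steps. -/
def OpData.ChainLe2 (D : OpData) {a b : Paths D.TotalObj} (u v : a ⟶ b) : Prop :=
  u = v ∨ D.Step u v ∨ ∃ w, D.Step u w ∧ D.Step w v

/-! Every rule rewrites a word of length two, so two redexes in a word are disjoint (and the
two rewrites commute), coincide (and the rules are deterministic), or overlap in one letter.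
An overlap is a critical pair of three generators. All of them close up by the category laws
of `O_k` except `γ, g, g'` (a face map followed by two morphisms), whose two reducts meet at
the restriction of `g ≫ g'` along `γ` because restriction is functorial. -/

namespace Quiver.Path

variable {V : Type*} [Quiver V]

theorem exists_eq_comp_of_comp_eq_comp {a b c c' : V} {s : Path a c} {q : Path c b}
    {s' : Path a c'} {q' : Path c' b} (h : s.comp q = s'.comp q')
    (hl : s.length ≤ s'.length) : ∃ m : Path c c', s' = s.comp m ∧ q = m.comp q' := by
  induction q generalizing c' with
  | nil =>
    have hq' : q'.length = 0 := by
      have := congrArg length h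
      simp only [length_comp, length_nil] at this
      omega
    obtain rfl := eq_of_length_zero q' hq'
    obtain rfl := eq_nil_of_length_zero q' hq'
    exact ⟨nil, h.symm, rfl⟩
  | cons q e ih =>
    cases q' with
    | nil => exact ⟨q.cons e, h.symm, rfl⟩
    | cons q' e' =>
      injection h with h₀ _ hq he
      subst h₀
      obtain rfl := eq_of_heq he
      obtain ⟨m, rfl, rfl⟩ := ih (eq_of_heq hq) hl
      exact ⟨m, rfl, rfl⟩

theorem eq_toPath_of_length_eq_one {a b : V} (p : Path a b) (hp : p.length = 1) :
    ∃ e : a ⟶ b, p = e.toPath := by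
  obtain ⟨c, e, q, hq, rfl⟩ := p.eq_toPath_comp_of_length_eq_succ hp
  obtain rfl := eq_of_length_zero q hq
  obtain rfl := eq_nil_of_length_zero q hq
  exact ⟨e, rfl⟩

end Quiver.Path

namespace OpData

open Quiver (Path)
open Quiver.Path

variable {D : OpData}

abbrev Gen.toPath {a b : D.TotalObj} (e : D.Gen a b) : Path a b :=
  @Quiver.Hom.toPath D.TotalObj D.quiverTotal a b e

def RestrId (D : OpData) : Prop :=
  ∀ {k : ℕ} {x : D.Obj k} {α : D.Obj (k + 1)} (γ : D.G k x α), D.restr γ (𝟙 α) = ⟨x, 𝟙 x, γ⟩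

def RestrComp (D : OpData) : Prop :=
  ∀ {k : ℕ} {x : D.Obj k} {α β δ : D.Obj (k + 1)} (γ : D.G k x α) (g : α ⟶ β) (g' : β ⟶ δ),
    D.restr γ (g ≫ g') =
      ⟨(D.restr (D.restr γ g).2.2 g').1,
       (D.restr γ g).2.1 ≫ (D.restr (D.restr γ g).2.2 g').2.1,
       (D.restr (D.restr γ g).2.2 g').2.2⟩

/- From here on words are `Quiver.Path`s between objects of `D.TotalObj` rather than morphisms
of `Paths D.TotalObj`: the two types are only defeq, and `simp`/`rw` with the `Quiver.Path`
API fail on terms that mix them. -/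

def JoinableLe2 {a b : D.TotalObj} (u v : Path a b) : Prop :=
  ∃ w, D.ChainLe2 u w ∧ D.ChainLe2 v w

theorem Step.mk' {a b c d : D.TotalObj} (p : Path a b) {u v : Path b c} (q : Path c d)
    (h : D.ORel u v) : D.Step (p.comp (u.comp q)) (p.comp (v.comp q)) :=
  Step.mk p q h

theorem Step.of_oRel {a b : D.TotalObj} {u v : Path a b} (h : D.ORel u v) : D.Step u v := by
  simpa using Step.mk' nil nil h

theorem Step.exists_oRel {a b : D.TotalObj} {t t' : Path a b} (h : D.Step t t') :
    ∃ (c d : D.TotalObj) (p : Path a c) (u v : Path c d) (q : Path d b),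
      D.ORel u v ∧ t = p.comp (u.comp q) ∧ t' = p.comp (v.comp q) := by
  obtain ⟨p, q, h⟩ := h
  exact ⟨_, _, p, _, _, q, h, rfl, rfl⟩

theorem Step.whisker {a b c d : D.TotalObj} (p : Path a b) {u v : Path b c} (q : Path c d)
    (h : D.Step u v) : D.Step (p.comp (u.comp q)) (p.comp (v.comp q)) := by
  obtain ⟨_, _, p', _, _, q', h', rfl, rfl⟩ := h.exists_oRel
  simpa using Step.mk' (p.comp p') (q'.comp q) h'

theorem ChainLe2.whisker {a b c d : D.TotalObj} (p : Path a b) {u v : Path b c} (q : Path c d)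
    (h : D.ChainLe2 u v) : D.ChainLe2 (p.comp (u.comp q)) (p.comp (v.comp q)) := by
  rcases h with rfl | h | ⟨w, hw, hw'⟩
  exacts [.inl rfl, .inr (.inl (h.whisker p q)), .inr (.inr ⟨_, hw.whisker p q, hw'.whisker p q⟩)]

theorem JoinableLe2.symm {a b : D.TotalObj} {u v : Path a b} (h : D.JoinableLe2 u v) :
    D.JoinableLe2 v u :=
  let ⟨w, hu, hv⟩ := h; ⟨w, hv, hu⟩

theorem JoinableLe2.whisker {a b c d : D.TotalObj} (p : Path a b) {u v : Path b c}
    (q : Path c d) (h : D.JoinableLe2 u v) :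
    D.JoinableLe2 (p.comp (u.comp q)) (p.comp (v.comp q)) :=
  let ⟨w, hu, hv⟩ := h; ⟨p.comp (w.comp q), hu.whisker p q, hv.whisker p q⟩

theorem JoinableLe2.of_step_of_step {a b : D.TotalObj} {u v w : Path a b}
    (hu : D.Step u w) (hv : D.Step v w) : D.JoinableLe2 u v :=
  ⟨w, .inr (.inl hu), .inr (.inl hv)⟩

theorem ORel.length_eq_two {a b : D.TotalObj} {u v : Path a b} (h : D.ORel u v) :
    u.length = 2 := by
  cases h <;> rfl

theorem ORel.eq_of_oRel {a b : D.TotalObj} {u v v' : Path a b} (h : D.ORel u v)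
    (h' : D.ORel u v') : v = v' := by
  cases h <;> cases h' <;> rfl

theorem joinableLe2_of_overlap (hid : D.RestrId) (hcomp : D.RestrComp)
    {a b c d : D.TotalObj} (e₁ : D.Gen a b) (e₂ : D.Gen b c) (e₃ : D.Gen c d)
    {vL : Path a c} {vR : Path b d}
    (hL : D.ORel (e₁.toPath.comp e₂.toPath) vL) (hR : D.ORel (e₂.toPath.comp e₃.toPath) vR) :
    D.JoinableLe2 (vL.comp e₃.toPath) (e₁.toPath.comp vR) := by
  cases hL with
  | r1 γ g =>
    cases hR with
    | r2 _ g' =>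
      refine ⟨_, .inr (.inr ⟨(Gen.ofHom (D.restr γ g).2.1).toPath.comp
        ((Gen.ofHom (D.restr (D.restr γ g).2.2 g').2.1).toPath.comp
          (Gen.face (D.restr (D.restr γ g).2.2 g').2.2).toPath), ?_, ?_⟩),
        .inr (.inl (.of_oRel (.r1 γ (g ≫ g'))))⟩
      · exact Step.mk' (Gen.ofHom (D.restr γ g).2.1).toPath nil (.r1 (D.restr γ g).2.2 g')
      · rw [hcomp γ g g']
        exact Step.mk' nil (Gen.face (D.restr (D.restr γ g).2.2 g').2.2).toPath
          (.r2 (D.restr γ g).2.1 (D.restr (D.restr γ g).2.2 g').2.1)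
    | r3 γ' =>
      refine ⟨_, .inr (.inl ?_), .inl rfl⟩
      rw [hid γ]
      exact Step.mk' nil (Gen.face γ').toPath (.r3 γ)
  | r2 f g =>
    cases hR with
    | r2 _ g' =>
      refine .of_step_of_step (w := (Gen.ofHom (f ≫ g ≫ g')).toPath) ?_ (.of_oRel (.r2 f _))
      rw [← Category.assoc]
      exact Step.of_oRel (.r2 (f ≫ g) g')
    | r3 γ' => exact ⟨_, .inl (by rw [Category.comp_id]), .inl rfl⟩
  | r3 γ =>
    cases hR with
    | r1 _ g =>
      refine .of_step_of_step (.of_oRel (.r1 γ g)) ?_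
      have h := Step.mk' nil (Gen.face (D.restr γ g).2.2).toPath (.r2 (𝟙 _) (D.restr γ g).2.1)
      rw [Category.id_comp (D.restr γ g).2.1] at h
      exact h

theorem joinableLe2_of_comp_eq_comp (hid : D.RestrId) (hcomp : D.RestrComp)
    {b c d c' d' : D.TotalObj} {u v : Path c d} {q : Path d b} {m : Path c c'}
    {u' v' : Path c' d'} {q' : Path d' b} (hr : D.ORel u v) (hr' : D.ORel u' v')
    (h : u.comp q = m.comp (u'.comp q')) :
    D.JoinableLe2 (v.comp q) (m.comp (v'.comp q')) := by
  have hu := hr.length_eq_two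
  have hu' := hr'.length_eq_two
  rcases (by omega : m.length = 0 ∨ m.length = 1 ∨ 2 ≤ m.length) with hm | hm | hm
  · obtain rfl := eq_of_length_zero m hm
    obtain rfl := eq_nil_of_length_zero m hm
    rw [nil_comp] at h ⊢
    obtain ⟨n, rfl, rfl⟩ := exists_eq_comp_of_comp_eq_comp h (by omega)
    have hn : n.length = 0 := by rw [length_comp] at hu'; omega
    obtain rfl := eq_of_length_zero n hn
    obtain rfl := eq_nil_of_length_zero n hn
    obtain rfl := hr.eq_of_oRel hr'
    exact ⟨_, .inl rfl, .inl (by simp)⟩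
  · obtain ⟨e₁, rfl⟩ := eq_toPath_of_length_eq_one m hm
    obtain ⟨n, rfl, hn⟩ := exists_eq_comp_of_comp_eq_comp h.symm (by omega)
    obtain ⟨e₂, rfl⟩ := eq_toPath_of_length_eq_one n (by simp at hu; omega)
    obtain ⟨k, rfl, rfl⟩ := exists_eq_comp_of_comp_eq_comp hn.symm (by simp; omega)
    obtain ⟨e₃, rfl⟩ := eq_toPath_of_length_eq_one k (by simp at hu'; omega)
    simpa only [comp_assoc, nil_comp] using
      (joinableLe2_of_overlap hid hcomp e₁ e₂ e₃ hr hr').whisker nil q'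
  · obtain ⟨n, rfl, rfl⟩ := exists_eq_comp_of_comp_eq_comp h (by omega)
    refine .of_step_of_step (w := v.comp (n.comp (v'.comp q'))) ?_ ?_
    · simpa using Step.mk' (v.comp n) q' hr'
    · simpa using Step.mk' nil (n.comp (v'.comp q')) hr

theorem Step.joinableLe2 (hid : D.RestrId) (hcomp : D.RestrComp) {a b : D.TotalObj}
    {t t' t'' : Path a b} (h₁ : D.Step t t') (h₂ : D.Step t t'') : D.JoinableLe2 t' t'' := by
  obtain ⟨_, _, p, u, v, q, hr, rfl, rfl⟩ := h₁.exists_oRel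
  obtain ⟨_, _, p', u', v', q', hr', heq, rfl⟩ := h₂.exists_oRel
  rcases le_total p.length p'.length with hl | hl
  · obtain ⟨m, rfl, h⟩ := exists_eq_comp_of_comp_eq_comp heq hl
    simpa using (joinableLe2_of_comp_eq_comp hid hcomp hr hr' h).whisker p nil
  · obtain ⟨m, rfl, h⟩ := exists_eq_comp_of_comp_eq_comp heq.symm hl
    simpa using ((joinableLe2_of_comp_eq_comp hid hcomp hr' hr h).whisker p' nil).symm

end OpData

theorem rewriting_locally_confluent_general (D : OpData)
    (hid : ∀ {k : ℕ} {x : D.Obj k} {α : D.Obj (k + 1)} (γ : D.G k x α),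
      D.restr γ (𝟙 α) = ⟨x, 𝟙 x, γ⟩)
    (hcomp : ∀ {k : ℕ} {x : D.Obj k} {α β δ : D.Obj (k + 1)}
      (γ : D.G k x α) (g : α ⟶ β) (g' : β ⟶ δ),
      D.restr γ (g ≫ g') =
        ⟨(D.restr (D.restr γ g).2.2 g').1,
         (D.restr γ g).2.1 ≫ (D.restr (D.restr γ g).2.2 g').2.1,
         (D.restr (D.restr γ g).2.2 g').2.2⟩)
    {a b : Paths D.TotalObj} {t t' t'' : a ⟶ b}
    (h1 : D.Step t t') (h2 : D.Step t t'') :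
    ∃ t''', D.ChainLe2 t' t''' ∧ D.ChainLe2 t'' t''' :=
  OpData.Step.joinableLe2 hid hcomp h1 h2

/-- Under the hypotheses that each `O_k` has subsingleton hom-sets and
that restriction of morphisms along face maps is functorial (uniqueness of restriction),
the rewriting system on words of generators of `O` is locally confluent:  if a word `t`
rewrites in one step both to `t'` and to `t''`, then there is a word `t'''` reachable from
`t'` and from `t''` by chains of rewrites of length at most `2`. -/
theorem rewriting_locally_confluent (D : OpData)
    (hsub : ∀ (k : ℕ) (a b : D.Obj k), Subsingleton (a ⟶ b))
    (hid : ∀ {k : ℕ} {x : D.Obj k} {α : D.Obj (k + 1)} (γ : D.G k x α),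
      D.restr γ (𝟙 α) = ⟨x, 𝟙 x, γ⟩)
    (hcomp : ∀ {k : ℕ} {x : D.Obj k} {α β δ : D.Obj (k + 1)}
      (γ : D.G k x α) (g : α ⟶ β) (g' : β ⟶ δ),
      D.restr γ (g ≫ g') =
        ⟨(D.restr (D.restr γ g).2.2 g').1,
         (D.restr γ g).2.1 ≫ (D.restr (D.restr γ g).2.2 g').2.1,
         (D.restr (D.restr γ g).2.2 g').2.2⟩)
    {a b : Paths D.TotalObj} {t t' t'' : a ⟶ b}
    (h1 : D.Step t t') (h2 : D.Step t t'') :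
    ∃ t''', D.ChainLe2 t' t''' ∧ D.ChainLe2 t'' t''' :=
  rewriting_locally_confluent_general D hid hcomp h1 h2
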